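/- arXiv:math/9803032 — 3 statements merged into one kernel-verified Lean document; each statement's English description precedes it below -/
import Mathlib

section
/- Let p ≥ 1 be an integer, n = 2p+1, and let q ∈ ℂ satisfy q^n = 1 and q ≠ 1. Then there exists a : ZMod n → ℂ with a(i) ≠ 0 for all i, such that for every i ∈ ZMod n, ‖a(i+2)‖² − ‖a(i)‖² = (q^(i+2) − q^(−(i+2)))/(q − q⁻¹) (equality in ℂ, with the real number ‖a(i+2)‖² − ‖a(i)‖² coerced to ℂ). -/
/-!
Writing `c(y) = (y + y⁻¹) / (q - q⁻¹)²`, the quantum integer `(x - x⁻¹) / (q - q⁻¹)` equals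
`c(x q) - c(x q⁻¹)`, and it is real because `|x| = |q| = 1`. Hence, with `x = q^(i+2)`, the
right-hand sides are the differences `g(i+2) - g(i)` of the real function `g(i) = Re c(q^(i+1))`
on `ZMod n`; adding a constant makes `g` positive, and `a(i) = √(g(i) + C)` works.
-/

open Complex

lemma pow_mod_of_pow_eq_one {M : Type*} [Monoid M] {q : M} {n : ℕ} (hq : q ^ n = 1) (m : ℕ) :
    q ^ (m % n) = q ^ m := by
  conv_rhs => rw [← Nat.mod_add_div m n, pow_add, pow_mul, hq, one_pow, mul_one]

lemma pow_val_add_one {M : Type*} [Monoid M] {q : M} {n : ℕ} [NeZero n] (hq : q ^ n = 1)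
    (i : ZMod n) : q ^ (i + 1).val = q ^ i.val * q := by
  rw [ZMod.val_add, ZMod.val_one_eq_one_mod, pow_mod_of_pow_eq_one hq, pow_add,
    pow_mod_of_pow_eq_one hq, pow_one]

lemma sub_inv_ne_zero_of_pow_eq_one {K : Type*} [DivisionRing K] {q : K} {n : ℕ} (hn : Odd n)
    (hq : q ^ n = 1) (hq1 : q ≠ 1) : q - q⁻¹ ≠ 0 := by
  obtain ⟨p, rfl⟩ := hn
  have hq0 : q ≠ 0 := by
    rintro rfl
    simp at hq
  intro h
  have hsq : q ^ 2 = 1 := by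
    rw [sq]
    nth_rewrite 2 [sub_eq_zero.mp h]
    exact mul_inv_cancel₀ hq0
  exact hq1 (by rwa [pow_succ, pow_mul, hsq, one_pow, one_mul] at hq)

lemma sub_inv_div_eq_add_inv_sub_add_inv_div_sq {K : Type*} [Field K] {q : K}
    (hq : q - q⁻¹ ≠ 0) {z : K} (hz : z ≠ 0) :
    (z * q - (z * q)⁻¹) / (q - q⁻¹) =
      ((z * q * q + (z * q * q)⁻¹) - (z + z⁻¹)) / (q - q⁻¹) ^ 2 := by
  have hq0 : q ≠ 0 := by
    rintro rfl
    simp at hq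
  rw [div_eq_div_iff hq (pow_ne_zero 2 hq)]
  field_simp
  ring

lemma ofReal_re_sub_inv_div_sub_inv {z w : ℂ} (hz : ‖z‖ = 1) (hw : ‖w‖ = 1) :
    (((z - z⁻¹) / (w - w⁻¹)).re : ℂ) = (z - z⁻¹) / (w - w⁻¹) := by
  rw [← conj_eq_iff_re, map_div₀, map_sub, map_sub, map_inv₀, map_inv₀, ← inv_eq_conj hz,
    ← inv_eq_conj hw, inv_inv, inv_inv, ← neg_sub z, ← neg_sub w, neg_div_neg_eq]

lemma exists_ne_zero_norm_sq_sub_eq {ι : Type*} [Finite ι] (g : ι → ℝ) :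
    ∃ a : ι → ℂ, (∀ i, a i ≠ 0) ∧ ∀ i j, ‖a i‖ ^ 2 - ‖a j‖ ^ 2 = g i - g j := by
  obtain ⟨C, hC⟩ := (Set.finite_range g).bddBelow
  have hpos : ∀ i, 0 < g i - C + 1 := fun i => by linarith [hC (Set.mem_range_self i)]
  refine ⟨fun i => (Real.sqrt (g i - C + 1) : ℂ), fun i => ?_, fun i j => ?_⟩
  · exact ofReal_ne_zero.mpr (Real.sqrt_pos.mpr (hpos i)).ne'
  · simp only [norm_real, Real.norm_eq_abs, sq_abs, Real.sq_sqrt (hpos _).le]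
    ring

theorem stmt_7_general (p : ℕ) (q : ℂ) (hq : q ^ (2 * p + 1) = 1)
    (hq1 : q ≠ 1) :
    ∃ a : ZMod (2 * p + 1) → ℂ, (∀ i, a i ≠ 0) ∧
      ∀ i : ZMod (2 * p + 1),
        ((‖a (i + 2)‖ ^ 2 - ‖a i‖ ^ 2 : ℝ) : ℂ) =
          (q ^ (i + 2).val - (q ^ (i + 2).val)⁻¹) / (q - q⁻¹) := by
  have hsub : q - q⁻¹ ≠ 0 := sub_inv_ne_zero_of_pow_eq_one ⟨p, rfl⟩ hq hq1
  have hnorm : ‖q‖ = 1 := norm_eq_one_of_pow_eq_one hq (by omega)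
  have hq0 : q ≠ 0 := norm_ne_zero_iff.mp (by simp [hnorm])
  obtain ⟨a, ha0, ha⟩ := exists_ne_zero_norm_sq_sub_eq fun i : ZMod (2 * p + 1) =>
    ((q ^ (i + 1).val + (q ^ (i + 1).val)⁻¹) / (q - q⁻¹) ^ 2).re
  refine ⟨a, ha0, fun i => ?_⟩
  rw [ha, ← ofReal_re_sub_inv_div_sub_inv (by rw [norm_pow, hnorm, one_pow]) hnorm,
    show i + 2 + 1 = i + 1 + 1 + 1 by ring, show i + 2 = i + 1 + 1 by ring,
    pow_val_add_one hq (i + 1 + 1), pow_val_add_one hq (i + 1),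
    sub_inv_div_eq_add_inv_sub_add_inv_div_sq hsub (pow_ne_zero _ hq0), sub_div, sub_re]

theorem stmt_7 (p : ℕ) (hp : 1 ≤ p) (q : ℂ) (hq : q ^ (2 * p + 1) = 1)
    (hq1 : q ≠ 1) :
    ∃ a : ZMod (2 * p + 1) → ℂ, (∀ i, a i ≠ 0) ∧
      ∀ i : ZMod (2 * p + 1),
        ((‖a (i + 2)‖ ^ 2 - ‖a i‖ ^ 2 : ℝ) : ℂ) =
          (q ^ (i + 2).val - (q ^ (i + 2).val)⁻¹) / (q - q⁻¹) :=
  stmt_7_general p q hq hq1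
end

section
/- Let p ≥ 1 be an integer, n = 2p+1, and let q ∈ ℂ satisfy q^n = 1 and q ≠ 1. Let a : ZMod n → ℂ satisfy the recurrence: for all i ∈ ZMod n, ‖a(i+2)‖² − ‖a(i)‖² = (q^(i+2) − q^(−(i+2)))/(q − q⁻¹) (equality in ℂ). Let K be the diagonal matrix with K_{i,i} = q^i, let E₊ have (i,j) entry a(i) if j = i+2 and 0 otherwise, and let E₋ have (i,j) entry conj(a(j)) if i = j+2 and 0 otherwise. Then E₊ · E₋ − E₋ · E₊ = (K − K⁻¹) / (q − q⁻¹), where K⁻¹ is the diagonal matrix with entries q^(−i). -/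
/-!
`E₊` and `E₋` shift by `2` in opposite directions, so both `E₊ E₋` and `E₋ E₊` are diagonal,
with entries `‖a i‖²` and `‖a (i - 2)‖²`; the recurrence at `i - 2` identifies their difference
with `(q ^ i - q⁻ⁱ) / (q - q⁻¹)`.
-/

namespace Matrix

variable {G R : Type*} [AddGroup G] [Fintype G] [DecidableEq G]

def shiftUp [Zero R] (s : G) (a : G → R) : Matrix G G R :=
  of fun i j => if j = i + s then a i else 0

def shiftDown [Zero R] (s : G) (b : G → R) : Matrix G G R :=
  of fun i j => if i = j + s then b j else 0

section Semiring

variable [NonUnitalNonAssocSemiring R]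

theorem shiftUp_mul_shiftDown (s : G) (a b : G → R) :
    shiftUp s a * shiftDown s b = diagonal fun i => a i * b i := by
  ext i j
  rw [mul_apply, Finset.sum_eq_single (i + s)]
  · by_cases hij : i = j
    · subst hij
      simp [shiftUp, shiftDown]
    · simp [shiftUp, shiftDown, hij]
  · intro k _ hk
    simp [shiftUp, hk]
  · simp

theorem shiftDown_mul_shiftUp (s : G) (a b : G → R) :
    shiftDown s b * shiftUp s a = diagonal fun i => b (i - s) * a (i - s) := by
  ext i j
  rw [mul_apply, Finset.sum_eq_single (i - s)]
  · by_cases hij : i = j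
    · subst hij
      simp [shiftUp, shiftDown]
    · simp [shiftUp, shiftDown, hij, Ne.symm hij]
  · intro k _ hk
    have hi : i ≠ k + s := fun h => hk (eq_sub_of_add_eq h.symm)
    simp [shiftDown, hi]
  · simp

end Semiring

theorem shiftUp_mul_shiftDown_sub_shiftDown_mul_shiftUp [NonUnitalNonAssocRing R]
    (s : G) (a b : G → R) :
    shiftUp s a * shiftDown s b - shiftDown s b * shiftUp s a =
      diagonal fun i => a i * b i - b (i - s) * a (i - s) := by
  rw [shiftUp_mul_shiftDown, shiftDown_mul_shiftUp, diagonal_sub]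

end Matrix

open Matrix

theorem stmt_12_general (p : ℕ) (q : ℂ) (a : ZMod (2 * p + 1) → ℂ)
    (ha : ∀ i : ZMod (2 * p + 1),
      ((‖a (i + 2)‖ ^ 2 - ‖a i‖ ^ 2 : ℝ) : ℂ) =
        (q ^ (i + 2).val - (q ^ (i + 2).val)⁻¹) / (q - q⁻¹))
    (K Kinv Eplus Eminus : Matrix (ZMod (2 * p + 1)) (ZMod (2 * p + 1)) ℂ)
    (hK : K = Matrix.diagonal fun i => q ^ i.val)
    (hKinv : Kinv = Matrix.diagonal fun i => (q ^ i.val)⁻¹)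
    (hEplus : Eplus = Matrix.of fun i j => if j = i + 2 then a i else 0)
    (hEminus : Eminus = Matrix.of fun i j => if i = j + 2 then star (a j) else 0) :
    Eplus * Eminus - Eminus * Eplus = (q - q⁻¹)⁻¹ • (K - Kinv) := by
  change Eplus = shiftUp 2 a at hEplus
  change Eminus = shiftDown 2 (star a) at hEminus
  subst hK hKinv hEplus hEminus
  rw [shiftUp_mul_shiftDown_sub_shiftDown_mul_shiftUp, diagonal_sub, ← diagonal_smul]
  congr 1
  funext i
  have hi := ha (i - 2)
  rw [sub_add_cancel] at hi
  push_cast at hi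
  simp only [Pi.star_apply, RCLike.star_def, Complex.mul_conj', Complex.conj_mul', hi]
  rw [Pi.smul_apply, smul_eq_mul, div_eq_inv_mul]

theorem stmt_12 (p : ℕ) (hp : 1 ≤ p) (q : ℂ) (hq : q ^ (2 * p + 1) = 1)
    (hq1 : q ≠ 1) (a : ZMod (2 * p + 1) → ℂ)
    (ha : ∀ i : ZMod (2 * p + 1),
      ((‖a (i + 2)‖ ^ 2 - ‖a i‖ ^ 2 : ℝ) : ℂ) =
        (q ^ (i + 2).val - (q ^ (i + 2).val)⁻¹) / (q - q⁻¹))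
    (K Kinv Eplus Eminus : Matrix (ZMod (2 * p + 1)) (ZMod (2 * p + 1)) ℂ)
    (hK : K = Matrix.diagonal fun i => q ^ i.val)
    (hKinv : Kinv = Matrix.diagonal fun i => (q ^ i.val)⁻¹)
    (hEplus : Eplus = Matrix.of fun i j => if j = i + 2 then a i else 0)
    (hEminus : Eminus = Matrix.of fun i j => if i = j + 2 then star (a j) else 0) :
    Eplus * Eminus - Eminus * Eplus = (q - q⁻¹)⁻¹ • (K - Kinv) :=
  stmt_12_general p q a ha K Kinv Eplus Eminus hK hKinv hEplus hEminus
end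

section
/- Let p ≥ 1 be an integer, n = 2p+1, and let q ∈ ℂ satisfy q^n = 1 and q ≠ 1. Let a : ZMod n → ℂ have a(i) ≠ 0 for all i and satisfy, for all i ∈ ZMod n, ‖a(i+2)‖² − ‖a(i)‖² = (q^(i+2) − q^(−(i+2)))/(q − q⁻¹). Let K be the diagonal matrix with K_{i,i} = q^i, let E₊ have (i,j) entry a(i) if j = i+2 and 0 otherwise, and let E₋ have (i,j) entry conj(a(j)) if i = j+2 and 0 otherwise. Then: (1) K is unitary with inverse the diagonal matrix with entries q^(−i); (2) E₋ is the conjugate transpose of E₊; (3) K·E₊ = q^(−2)·(E₊·K) and K·E₋ = q²·(E₋·K); (4) E₊·E₋ − E₋·E₊ = (K − K⁻¹)/(q − q⁻¹); and (5) E₊ and E₋ are invertible. -/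
/-!
`E₊` and `E₋ = E₊ᴴ` are weighted cyclic shifts of `ZMod n` by `±2`, and `K` is the diagonal
matrix of the character `i ↦ q ^ i` (well defined because `q ^ n = 1`). Weighted shifts compose
by adding shifts and multiplying weights, so every relation reduces to an identity of diagonal
weights: moving `K` past a shift by `s` multiplies by `q ^ s`; the commutator `E₊E₋ - E₋E₊` is
the diagonal of `‖a i‖² - ‖a (i - 2)‖²`, which the hypothesis on `a` identifies with
`(q ^ i - q ^ -i) / (q - q⁻¹)`; and a shift with nowhere vanishing weights is inverted by the
opposite shift with inverted weights. `K` is unitary because `|q| = 1`.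
-/

namespace Matrix

variable {G R : Type*} [AddCommGroup G] [DecidableEq G]

def weightedShift [Zero R] (a : G → R) (s : G) : Matrix G G R :=
  of fun i j => if j = i + s then a i else 0

@[simp]
theorem weightedShift_apply [Zero R] (a : G → R) (s i j : G) :
    weightedShift a s i j = if j = i + s then a i else 0 :=
  rfl

theorem weightedShift_zero [Zero R] (a : G → R) : weightedShift a 0 = diagonal a := by
  ext i j
  simp [diagonal_apply, eq_comm]

theorem weightedShift_mul_weightedShift [Fintype G] [NonUnitalNonAssocSemiring R]
    (a b : G → R) (s t : G) :
    weightedShift a s * weightedShift b t =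
      weightedShift (fun i => a i * b (i + s)) (s + t) := by
  ext i j
  rw [mul_apply, Finset.sum_eq_single (i + s) (fun k _ hk => by simp [hk]) (by simp)]
  simp [add_assoc]

theorem smul_weightedShift [Semiring R] (c : R) (a : G → R) (s : G) :
    c • weightedShift a s = weightedShift (c • a) s := by
  ext i j
  simp

theorem conjTranspose_weightedShift [AddMonoid R] [StarAddMonoid R] (a : G → R) (s : G) :
    (weightedShift a s)ᴴ = weightedShift (fun i => star (a (i - s))) (-s) := by
  ext i j
  by_cases h : i = j + s
  · simp [h]
  · have hj : j ≠ i + -s := by rintro rfl; exact h (neg_add_cancel_right i s).symm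
    simp [h, hj]

theorem diagonal_mul_weightedShift [Fintype G] [CommSemiring R] {d : G → R} {c : R} {s : G}
    (hd : ∀ i, d i = c * d (i + s)) (a : G → R) :
    diagonal d * weightedShift a s = c • (weightedShift a s * diagonal d) := by
  rw [← weightedShift_zero, weightedShift_mul_weightedShift, weightedShift_mul_weightedShift,
    smul_weightedShift, zero_add, add_zero]
  congr 1
  ext i
  simp only [Pi.smul_apply, smul_eq_mul, add_zero, hd i]
  ring

theorem lie_weightedShift_conjTranspose [Fintype G] [Ring R] [StarRing R] (a : G → R) (s : G) :
    ⁅weightedShift a s, (weightedShift a s)ᴴ⁆ =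
      diagonal fun i => a i * star (a i) - star (a (i - s)) * a (i - s) := by
  rw [Ring.lie_def, conjTranspose_weightedShift, weightedShift_mul_weightedShift,
    weightedShift_mul_weightedShift, add_neg_cancel, neg_add_cancel, weightedShift_zero,
    weightedShift_zero, diagonal_sub]
  simp only [sub_eq_add_neg, add_neg_cancel_right]

theorem isUnit_weightedShift [Fintype G] [CommRing R] {a : G → R} (ha : ∀ i, IsUnit (a i))
    (s : G) : IsUnit (weightedShift a s) := by
  refine IsUnit.of_mul_eq_one (weightedShift (fun i => Ring.inverse (a (i - s))) (-s)) ?_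
  simp only [weightedShift_mul_weightedShift, add_sub_cancel_right, add_neg_cancel,
    weightedShift_zero, Ring.mul_inverse_cancel _ (ha _), diagonal_one]

end Matrix

section RootOfUnity

variable {M : Type*} [Monoid M] {n : ℕ} {q : M}

theorem pow_zmod_val_add [NeZero n] (hq : q ^ n = 1) (i j : ZMod n) :
    q ^ (i + j).val = q ^ i.val * q ^ j.val := by
  rw [ZMod.val_add, ← pow_eq_pow_mod _ hq, pow_add]

theorem pow_zmod_val_natCast (hq : q ^ n = 1) (m : ℕ) : q ^ (m : ZMod n).val = q ^ m := by
  rw [ZMod.val_natCast, ← pow_eq_pow_mod _ hq]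

theorem pow_zmod_val_ofNat (hq : q ^ n = 1) (m : ℕ) [m.AtLeastTwo] :
    q ^ (OfNat.ofNat m : ZMod n).val = q ^ (OfNat.ofNat m : ℕ) :=
  pow_zmod_val_natCast hq m

end RootOfUnity

open Matrix in
theorem stmt_13_general (p : ℕ) (q : ℂ) (hq : q ^ (2 * p + 1) = 1)
    (a : ZMod (2 * p + 1) → ℂ) (ha0 : ∀ i, a i ≠ 0)
    (ha : ∀ i : ZMod (2 * p + 1),
      ((‖a (i + 2)‖ ^ 2 - ‖a i‖ ^ 2 : ℝ) : ℂ) =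
        (q ^ (i + 2).val - (q ^ (i + 2).val)⁻¹) / (q - q⁻¹))
    (K Kinv Eplus Eminus : Matrix (ZMod (2 * p + 1)) (ZMod (2 * p + 1)) ℂ)
    (hK : K = Matrix.diagonal fun i => q ^ i.val)
    (hKinv : Kinv = Matrix.diagonal fun i => (q ^ i.val)⁻¹)
    (hEplus : Eplus = Matrix.of fun i j => if j = i + 2 then a i else 0)
    (hEminus : Eminus = Matrix.of fun i j => if i = j + 2 then star (a j) else 0) :
    (K * Kinv = 1 ∧ Kinv * K = 1 ∧ Kᴴ = Kinv) ∧
    Eminus = Eplusᴴ ∧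
    (K * Eplus = (q ^ 2)⁻¹ • (Eplus * K) ∧ K * Eminus = q ^ 2 • (Eminus * K)) ∧
    Eplus * Eminus - Eminus * Eplus = (q - q⁻¹)⁻¹ • (K - Kinv) ∧
    IsUnit Eplus ∧ IsUnit Eminus := by
  have hq0 : q ≠ 0 := by rintro rfl; simp at hq
  have hstar : star q = q⁻¹ :=
    (Complex.inv_eq_conj (Complex.norm_eq_one_of_pow_eq_one hq (by omega))).symm
  have hpow_sub_two : ∀ i : ZMod (2 * p + 1), q ^ (i + -2).val * q ^ 2 = q ^ i.val := fun i => by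
    rw [← pow_zmod_val_ofNat hq 2, ← pow_zmod_val_add hq, neg_add_cancel_right]
  have hEH : Eminus = Eplusᴴ := by
    ext i j
    simp [hEplus, hEminus, apply_ite star]
  have hEW : Eplus = weightedShift a 2 := hEplus
  have hEHW : Eminus = weightedShift (fun i => star (a (i - 2))) (-2) := by
    rw [hEH, hEW, conjTranspose_weightedShift]
  refine ⟨⟨?_, ?_, ?_⟩, hEH, ⟨?_, ?_⟩, ?_, ?_, ?_⟩
  · simp [hK, hKinv, hq0]
  · simp [hK, hKinv, hq0]
  · simp [hK, hKinv, star_pow, hstar]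
  · refine hK ▸ hEW ▸ diagonal_mul_weightedShift (fun i => ?_) a
    rw [pow_zmod_val_add hq, pow_zmod_val_ofNat hq]
    field_simp
  · exact hK ▸ hEHW ▸
      diagonal_mul_weightedShift (fun i => by rw [← hpow_sub_two i, mul_comm]) _
  · rw [← Ring.lie_def, hEH, hEW, lie_weightedShift_conjTranspose, hK, hKinv, diagonal_sub,
      ← diagonal_smul]
    congr 1
    ext i
    have hai := ha (i - 2)
    rw [sub_add_cancel] at hai
    rw [Pi.smul_apply, smul_eq_mul, mul_comm (star _), inv_mul_eq_div, ← hai,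
      Complex.ofReal_sub, Complex.ofReal_pow, Complex.ofReal_pow, ← Complex.mul_conj',
      ← Complex.mul_conj']
    rfl
  · exact hEW ▸ isUnit_weightedShift (fun i => (ha0 i).isUnit) 2
  · exact hEHW ▸ isUnit_weightedShift (fun i => (star_ne_zero.mpr (ha0 _)).isUnit) (-2)

open Matrix in
theorem stmt_13 (p : ℕ) (hp : 1 ≤ p) (q : ℂ) (hq : q ^ (2 * p + 1) = 1)
    (hq1 : q ≠ 1) (a : ZMod (2 * p + 1) → ℂ) (ha0 : ∀ i, a i ≠ 0)
    (ha : ∀ i : ZMod (2 * p + 1),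
      ((‖a (i + 2)‖ ^ 2 - ‖a i‖ ^ 2 : ℝ) : ℂ) =
        (q ^ (i + 2).val - (q ^ (i + 2).val)⁻¹) / (q - q⁻¹))
    (K Kinv Eplus Eminus : Matrix (ZMod (2 * p + 1)) (ZMod (2 * p + 1)) ℂ)
    (hK : K = Matrix.diagonal fun i => q ^ i.val)
    (hKinv : Kinv = Matrix.diagonal fun i => (q ^ i.val)⁻¹)
    (hEplus : Eplus = Matrix.of fun i j => if j = i + 2 then a i else 0)
    (hEminus : Eminus = Matrix.of fun i j => if i = j + 2 then star (a j) else 0) :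
    (K * Kinv = 1 ∧ Kinv * K = 1 ∧ Kᴴ = Kinv) ∧
    Eminus = Eplusᴴ ∧
    (K * Eplus = (q ^ 2)⁻¹ • (Eplus * K) ∧ K * Eminus = q ^ 2 • (Eminus * K)) ∧
    Eplus * Eminus - Eminus * Eplus = (q - q⁻¹)⁻¹ • (K - Kinv) ∧
    IsUnit Eplus ∧ IsUnit Eminus :=
  stmt_13_general p q hq a ha0 ha K Kinv Eplus Eminus hK hKinv hEplus hEminus
end
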